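/- Let Q, P ⊆ ℝ^d be finite, disjoint, nonempty sets, m = |Q ∪ P|, ε = m⁻³, and let X be the constructed labeled data set. Suppose there are unit vectors h₁, h₂ ∈ ℝ^d and o₁, o₂ ∈ ℝ such that: (i) h₁·q + o₁ > 0 > h₂·q + o₂ for all q ∈ Q; (ii) for every p ∈ P, the numbers h₁·p + o₁ and h₂·p + o₂ are either both positive or both negative; and (iii) |h_i·x + o_i| > ε for all x ∈ Q ∪ P and i ∈ {1,2}. Let β = 4/ε and define φ : ℝ^d → ℝ by φ(x) = max(0, β(h₁·x+o₁)) − max(0, β(h₁·x+o₁) − 1) − max(0, β(h₂·x+o₂)) + max(0, β(h₂·x+o₂) − 1). Then φ fits X exactly: φ(q) = 1 for all q ∈ Q, φ(p) = 0 for all p ∈ P, φ(r_{qp}) = 1 and φ(s_{qp}) = 0 for all (q,p) ∈ Q×P. In particular, X is exactly fittable by a two-layer network with 4 ReLU neurons. -/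

import Mathlib

open scoped RealInnerProductSpace Classical

/-- The interpolation parameter `δ_{qp} = ε / (2‖q − p‖)`. -/
noncomputable def dqp {d : ℕ} (ε : ℝ) (q p : EuclideanSpace ℝ (Fin d)) : ℝ :=
  ε / (2 * ‖q - p‖)

/-- The auxiliary point `r_{qp} = (1 − δ_{qp})·q + δ_{qp}·p`. -/
noncomputable def rqp {d : ℕ} (ε : ℝ) (q p : EuclideanSpace ℝ (Fin d)) :
    EuclideanSpace ℝ (Fin d) :=
  (1 - dqp ε q p) • q + dqp ε q p • p

/-- The auxiliary point `s_{qp} = δ_{qp}·q + (1 − δ_{qp})·p`. -/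
noncomputable def sqp {d : ℕ} (ε : ℝ) (q p : EuclideanSpace ℝ (Fin d)) :
    EuclideanSpace ℝ (Fin d) :=
  dqp ε q p • q + (1 - dqp ε q p) • p

/-- The labeled data set `X`: `(q,1)` for `q ∈ Q`, `(p,0)` for `p ∈ P`, and `(r_{qp},1)`,
`(s_{qp},0)` for `(q,p) ∈ Q × P`. -/
noncomputable def dataX {d : ℕ} (Q P : Finset (EuclideanSpace ℝ (Fin d))) (ε : ℝ) :
    Set (EuclideanSpace ℝ (Fin d) × ℝ) :=
  {z | (∃ q ∈ Q, z = (q, 1)) ∨ (∃ p ∈ P, z = (p, 0)) ∨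
    (∃ q ∈ Q, ∃ p ∈ P, z = (rqp ε q p, 1) ∨ z = (sqp ε q p, 0))}

/-! `φ` is the difference of two clipped ramps `t ↦ min (max t 0) 1`, each made of two ReLUs.
With steepness `β = 4 / ε` a ramp is `1` wherever its affine argument is at least `ε / 2` and `0`
wherever it is nonpositive, so `φ` is `1` where the first hyperplane is positive and the second
negative, and `0` where both have the same sign. The margin `ε` lets a data point move by `ε / 2`
without leaving these regions, and `r_{qp}`, `s_{qp}` lie within `ε / 2` of `q`, resp. `p`. -/

def ramp (t : ℝ) : ℝ := max 0 t - max 0 (t - 1)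

lemma ramp_of_one_le {t : ℝ} (h : 1 ≤ t) : ramp t = 1 := by
  rw [ramp, max_eq_right (by linarith), max_eq_right (by linarith)]; ring

lemma ramp_of_nonpos {t : ℝ} (h : t ≤ 0) : ramp t = 0 := by
  rw [ramp, max_eq_left h, max_eq_left (by linarith)]; ring

lemma ramp_four_div_mul_of_half_le {ε a : ℝ} (hε : 0 < ε) (ha : ε / 2 ≤ a) :
    ramp (4 / ε * a) = 1 := by
  apply ramp_of_one_le
  calc (1 : ℝ) ≤ 4 / ε * (ε / 2) := by field_simp; norm_num
    _ ≤ 4 / ε * a := by gcongr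

lemma ramp_four_div_mul_of_nonpos {ε a : ℝ} (hε : 0 ≤ ε) (ha : a ≤ 0) :
    ramp (4 / ε * a) = 0 :=
  ramp_of_nonpos (mul_nonpos_of_nonneg_of_nonpos (by positivity) ha)

section Perturbation

variable {E : Type*} [NormedAddCommGroup E] [InnerProductSpace ℝ E]

lemma abs_inner_sub_inner_le (h x y : E) : |⟪h, y⟫ - ⟪h, x⟫| ≤ ‖h‖ * ‖y - x‖ := by
  rw [← inner_sub_right]; exact abs_real_inner_le_norm h (y - x)

variable {h₁ h₂ x y : E} {o₁ o₂ ε : ℝ}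

lemma ramp_sub_ramp_eq_one_of_norm_sub_le (hε : 0 < ε) (hh₁ : ‖h₁‖ = 1) (hh₂ : ‖h₂‖ = 1)
    (hx₁ : ε < ⟪h₁, x⟫ + o₁) (hx₂ : ⟪h₂, x⟫ + o₂ < -ε) (hxy : ‖y - x‖ ≤ ε / 2) :
    ramp (4 / ε * (⟪h₁, y⟫ + o₁)) - ramp (4 / ε * (⟪h₂, y⟫ + o₂)) = 1 := by
  have d₁ := abs_inner_sub_inner_le h₁ x y
  have d₂ := abs_inner_sub_inner_le h₂ x y
  rw [hh₁, one_mul, abs_le] at d₁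
  rw [hh₂, one_mul, abs_le] at d₂
  rw [ramp_four_div_mul_of_half_le hε (by linarith), ramp_four_div_mul_of_nonpos hε.le (by linarith)]
  norm_num

lemma ramp_sub_ramp_eq_zero_of_norm_sub_le (hε : 0 < ε) (hh₁ : ‖h₁‖ = 1) (hh₂ : ‖h₂‖ = 1)
    (hx : (ε < ⟪h₁, x⟫ + o₁ ∧ ε < ⟪h₂, x⟫ + o₂) ∨ (⟪h₁, x⟫ + o₁ < -ε ∧ ⟪h₂, x⟫ + o₂ < -ε))
    (hxy : ‖y - x‖ ≤ ε / 2) :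
    ramp (4 / ε * (⟪h₁, y⟫ + o₁)) - ramp (4 / ε * (⟪h₂, y⟫ + o₂)) = 0 := by
  have d₁ := abs_inner_sub_inner_le h₁ x y
  have d₂ := abs_inner_sub_inner_le h₂ x y
  rw [hh₁, one_mul, abs_le] at d₁
  rw [hh₂, one_mul, abs_le] at d₂
  rcases hx with ⟨hx₁, hx₂⟩ | ⟨hx₁, hx₂⟩
  · rw [ramp_four_div_mul_of_half_le hε (by linarith),
      ramp_four_div_mul_of_half_le hε (by linarith), sub_self]
  · rw [ramp_four_div_mul_of_nonpos hε.le (by linarith),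
      ramp_four_div_mul_of_nonpos hε.le (by linarith), sub_self]

end Perturbation

section Interpolation

variable {d : ℕ} {ε : ℝ}

lemma dqp_mul_norm_sub_le (hε : 0 ≤ ε) (q p : EuclideanSpace ℝ (Fin d)) :
    dqp ε q p * ‖q - p‖ ≤ ε / 2 := by
  rcases (norm_nonneg (q - p)).eq_or_lt with h | h
  · rw [← h, mul_zero]; positivity
  · rw [dqp]; field_simp; rfl

lemma norm_rqp_sub_left_le (hε : 0 ≤ ε) (q p : EuclideanSpace ℝ (Fin d)) :
    ‖rqp ε q p - q‖ ≤ ε / 2 := by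
  have : rqp ε q p - q = dqp ε q p • (p - q) := by rw [rqp]; module
  rw [this, norm_smul, Real.norm_of_nonneg (by rw [dqp]; positivity), norm_sub_rev]
  exact dqp_mul_norm_sub_le hε q p

lemma norm_sqp_sub_right_le (hε : 0 ≤ ε) (q p : EuclideanSpace ℝ (Fin d)) :
    ‖sqp ε q p - p‖ ≤ ε / 2 := by
  have : sqp ε q p - p = dqp ε q p • (q - p) := by rw [sqp]; module
  rw [this, norm_smul, Real.norm_of_nonneg (by rw [dqp]; positivity)]
  exact dqp_mul_norm_sub_le hε q p

end Interpolation

theorem four_relus_fit_dataX_general (d : ℕ) (Q P : Finset (EuclideanSpace ℝ (Fin d)))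
    (hQ : Q.Nonempty)
    (m : ℕ) (hm : m = (Q ∪ P).card) (ε : ℝ) (hε : ε = ((m : ℝ) ^ 3)⁻¹)
    (h₁ h₂ : EuclideanSpace ℝ (Fin d)) (hh₁ : ‖h₁‖ = 1) (hh₂ : ‖h₂‖ = 1) (o₁ o₂ : ℝ)
    (hQsep : ∀ q ∈ Q, 0 < ⟪h₁, q⟫ + o₁ ∧ ⟪h₂, q⟫ + o₂ < 0)
    (hPsep : ∀ p ∈ P, (0 < ⟪h₁, p⟫ + o₁ ∧ 0 < ⟪h₂, p⟫ + o₂) ∨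
      (⟪h₁, p⟫ + o₁ < 0 ∧ ⟪h₂, p⟫ + o₂ < 0))
    (hmargin : ∀ x ∈ Q ∪ P, ε < |⟪h₁, x⟫ + o₁| ∧ ε < |⟪h₂, x⟫ + o₂|)
    (β : ℝ) (hβ : β = 4 / ε)
    (φ : EuclideanSpace ℝ (Fin d) → ℝ)
    (hφ : ∀ x, φ x =
      max 0 (β * (⟪h₁, x⟫ + o₁)) - max 0 (β * (⟪h₁, x⟫ + o₁) - 1)
        - max 0 (β * (⟪h₂, x⟫ + o₂)) + max 0 (β * (⟪h₂, x⟫ + o₂) - 1)) :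
    (∀ q ∈ Q, φ q = 1) ∧ (∀ p ∈ P, φ p = 0) ∧
    (∀ q ∈ Q, ∀ p ∈ P, φ (rqp ε q p) = 1 ∧ φ (sqp ε q p) = 0) ∧
    (∀ z ∈ dataX Q P ε, φ z.1 = z.2) := by
  have hε_pos : 0 < ε := by
    have : 0 < m := hm ▸ (hQ.mono Finset.subset_union_left).card_pos
    rw [hε]; positivity
  have hφ_ramp : ∀ x, φ x = ramp (4 / ε * (⟪h₁, x⟫ + o₁)) - ramp (4 / ε * (⟪h₂, x⟫ + o₂)) := by
    intro x; rw [hφ, ← hβ, ramp, ramp]; ring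
  have near_Q : ∀ q ∈ Q, ∀ y, ‖y - q‖ ≤ ε / 2 → φ y = 1 := by
    intro q hq y hy
    obtain ⟨hq₁, hq₂⟩ := hQsep q hq
    obtain ⟨hm₁, hm₂⟩ := hmargin q (Finset.mem_union_left P hq)
    rw [abs_of_pos hq₁] at hm₁
    rw [abs_of_neg hq₂] at hm₂
    rw [hφ_ramp]
    exact ramp_sub_ramp_eq_one_of_norm_sub_le hε_pos hh₁ hh₂ hm₁ (by linarith) hy
  have near_P : ∀ p ∈ P, ∀ y, ‖y - p‖ ≤ ε / 2 → φ y = 0 := by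
    intro p hp y hy
    obtain ⟨hm₁, hm₂⟩ := hmargin p (Finset.mem_union_right Q hp)
    rw [hφ_ramp]
    refine ramp_sub_ramp_eq_zero_of_norm_sub_le hε_pos hh₁ hh₂ ?_ hy
    rcases hPsep p hp with ⟨hp₁, hp₂⟩ | ⟨hp₁, hp₂⟩
    · rw [abs_of_pos hp₁] at hm₁
      rw [abs_of_pos hp₂] at hm₂
      exact Or.inl ⟨hm₁, hm₂⟩
    · rw [abs_of_neg hp₁] at hm₁
      rw [abs_of_neg hp₂] at hm₂
      exact Or.inr ⟨by linarith, by linarith⟩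
  have self_near : ∀ x : EuclideanSpace ℝ (Fin d), ‖x - x‖ ≤ ε / 2 := by
    intro x; rw [sub_self, norm_zero]; positivity
  have fit_Q : ∀ q ∈ Q, φ q = 1 := fun q hq => near_Q q hq q (self_near q)
  have fit_P : ∀ p ∈ P, φ p = 0 := fun p hp => near_P p hp p (self_near p)
  have fit_rs : ∀ q ∈ Q, ∀ p ∈ P, φ (rqp ε q p) = 1 ∧ φ (sqp ε q p) = 0 := fun q hq p hp =>
    ⟨near_Q q hq _ (norm_rqp_sub_left_le hε_pos.le q p),
      near_P p hp _ (norm_sqp_sub_right_le hε_pos.le q p)⟩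
  refine ⟨fit_Q, fit_P, fit_rs, ?_⟩
  rintro _ (⟨q, hq, rfl⟩ | ⟨p, hp, rfl⟩ | ⟨q, hq, p, hp, rfl | rfl⟩)
  exacts [fit_Q q hq, fit_P p hp, (fit_rs q hq p hp).1, (fit_rs q hq p hp).2]

/-- If two hyperplanes strictly separate `Q` and `P` (with margin `ε`), then the explicit
four-ReLU network `φ` fits the constructed data set `X` exactly. -/
theorem four_relus_fit_dataX (d : ℕ) (Q P : Finset (EuclideanSpace ℝ (Fin d)))
    (hQ : Q.Nonempty) (hP : P.Nonempty) (hdisj : Disjoint Q P)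
    (m : ℕ) (hm : m = (Q ∪ P).card) (ε : ℝ) (hε : ε = ((m : ℝ) ^ 3)⁻¹)
    (h₁ h₂ : EuclideanSpace ℝ (Fin d)) (hh₁ : ‖h₁‖ = 1) (hh₂ : ‖h₂‖ = 1) (o₁ o₂ : ℝ)
    (hQsep : ∀ q ∈ Q, 0 < ⟪h₁, q⟫ + o₁ ∧ ⟪h₂, q⟫ + o₂ < 0)
    (hPsep : ∀ p ∈ P, (0 < ⟪h₁, p⟫ + o₁ ∧ 0 < ⟪h₂, p⟫ + o₂) ∨
      (⟪h₁, p⟫ + o₁ < 0 ∧ ⟪h₂, p⟫ + o₂ < 0))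
    (hmargin : ∀ x ∈ Q ∪ P, ε < |⟪h₁, x⟫ + o₁| ∧ ε < |⟪h₂, x⟫ + o₂|)
    (β : ℝ) (hβ : β = 4 / ε)
    (φ : EuclideanSpace ℝ (Fin d) → ℝ)
    (hφ : ∀ x, φ x =
      max 0 (β * (⟪h₁, x⟫ + o₁)) - max 0 (β * (⟪h₁, x⟫ + o₁) - 1)
        - max 0 (β * (⟪h₂, x⟫ + o₂)) + max 0 (β * (⟪h₂, x⟫ + o₂) - 1)) :
    (∀ q ∈ Q, φ q = 1) ∧ (∀ p ∈ P, φ p = 0) ∧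
    (∀ q ∈ Q, ∀ p ∈ P, φ (rqp ε q p) = 1 ∧ φ (sqp ε q p) = 0) ∧
    (∀ z ∈ dataX Q P ε, φ z.1 = z.2) :=
  four_relus_fit_dataX_general d Q P hQ m hm ε hε h₁ h₂ hh₁ hh₂ o₁ o₂ hQsep hPsep hmargin β hβ φ hφ
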